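/- Let 𝒜 : ℝ^{m×n} → ℝ^p be a linear map and let Z_1, Z_2 be two m×n matrices with ⟨Z_1, Z_2⟩ = 0 (Frobenius orthogonality) and rank(Z_1) + rank(Z_2) ≤ min(m, n). Then |⟨𝒜(Z_1), 𝒜(Z_2)⟩| ≤ R_{rank(Z_1)+rank(Z_2)} ‖Z_1‖_F ‖Z_2‖_F, where R_{rank(Z_1)+rank(Z_2)} is the restricted isometry constant of 𝒜 of order rank(Z_1)+rank(Z_2). -/
import Mathlib


open Matrix BigOperators

/-- Frobenius inner product of two real matrices. -/
noncomputable def frobInner {m n : ℕ} (A B : Matrix (Fin m) (Fin n) ℝ) : ℝ :=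
  ∑ i, ∑ j, A i j * B i j

/-- Frobenius norm of a real matrix. -/
noncomputable def frobNorm {m n : ℕ} (A : Matrix (Fin m) (Fin n) ℝ) : ℝ :=
  Real.sqrt (∑ i, ∑ j, (A i j) ^ 2)

/-- Euclidean inner product on `ℝ^p`. -/
noncomputable def euclInner {p : ℕ} (x y : Fin p → ℝ) : ℝ := ∑ i, x i * y i

/-- Euclidean norm on `ℝ^p`. -/
noncomputable def euclNorm {p : ℕ} (x : Fin p → ℝ) : ℝ := Real.sqrt (∑ i, (x i) ^ 2)

/-- `R` is the restricted isometry constant of order `s` of the linear map `A`: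
the smallest number `t` such that `(1-t)‖Z‖_F² ≤ ‖A Z‖₂² ≤ (1+t)‖Z‖_F²`
for all matrices `Z` of rank at most `s`. -/
def IsRIC {m n p : ℕ} (A : Matrix (Fin m) (Fin n) ℝ →ₗ[ℝ] (Fin p → ℝ)) (s : ℕ) (R : ℝ) :
    Prop :=
  IsLeast {t : ℝ | ∀ Z : Matrix (Fin m) (Fin n) ℝ, Z.rank ≤ s →
    (1 - t) * (frobNorm Z) ^ 2 ≤ (euclNorm (A Z)) ^ 2 ∧
      (euclNorm (A Z)) ^ 2 ≤ (1 + t) * (frobNorm Z) ^ 2} R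

/-- Orthogonal projection onto the tangent space of the rank-`r` manifold at
`U * Σ * Vᵀ`: `P(Z) = U Uᵀ Z + Z V Vᵀ − U Uᵀ Z V Vᵀ`. -/
noncomputable def tangentProj {m n r : ℕ} (U : Matrix (Fin m) (Fin r) ℝ)
    (V : Matrix (Fin n) (Fin r) ℝ) (Z : Matrix (Fin m) (Fin n) ℝ) :
    Matrix (Fin m) (Fin n) ℝ :=
  U * Uᵀ * Z + Z * (V * Vᵀ) - U * Uᵀ * Z * (V * Vᵀ)

/-- Spectral (operator) norm of a real matrix. -/
noncomputable def specNorm {m n : ℕ} (A : Matrix (Fin m) (Fin n) ℝ) : ℝ :=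
  sSup {c : ℝ | ∃ x : Fin n → ℝ, euclNorm x ≤ 1 ∧ c = euclNorm (A.mulVec x)}

section Aux

lemma frobNorm_sq {m n : ℕ} (Z : Matrix (Fin m) (Fin n) ℝ) :
    (frobNorm Z) ^ 2 = ∑ i, ∑ j, (Z i j) ^ 2 := by
  rw [frobNorm, Real.sq_sqrt]
  exact Finset.sum_nonneg fun i _ => Finset.sum_nonneg fun j _ => sq_nonneg _

lemma euclNorm_sq {p : ℕ} (x : Fin p → ℝ) :
    (euclNorm x) ^ 2 = ∑ i, (x i) ^ 2 := by
  rw [euclNorm, Real.sq_sqrt]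
  exact Finset.sum_nonneg fun i _ => sq_nonneg _

lemma frobNorm_nonneg {m n : ℕ} (Z : Matrix (Fin m) (Fin n) ℝ) : 0 ≤ frobNorm Z :=
  Real.sqrt_nonneg _

lemma frobNorm_pos {m n : ℕ} {Z : Matrix (Fin m) (Fin n) ℝ} (h : Z ≠ 0) :
    0 < frobNorm Z := by
  apply Real.sqrt_pos.mpr
  obtain ⟨i, j, hij⟩ : ∃ i j, Z i j ≠ 0 := by
    by_contra hc
    push_neg at hc
    exact h (by ext i j; simp [hc i j])
  have h1 : 0 < ∑ j, (Z i j) ^ 2 :=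
    Finset.sum_pos' (fun j _ => sq_nonneg _)
      ⟨j, Finset.mem_univ j, by positivity⟩
  exact Finset.sum_pos' (fun i _ => Finset.sum_nonneg fun j _ => sq_nonneg _)
    ⟨i, Finset.mem_univ i, h1⟩

lemma mat_rank_add_le {m n : ℕ} (X Y : Matrix (Fin m) (Fin n) ℝ) :
    (X + Y).rank ≤ X.rank + Y.rank := by
  rw [Matrix.rank, Matrix.rank, Matrix.rank]
  have hle : LinearMap.range (X + Y).mulVecLin ≤
      LinearMap.range X.mulVecLin ⊔ LinearMap.range Y.mulVecLin := by
    rintro _ ⟨v, rfl⟩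
    rw [Matrix.mulVecLin_add]
    exact Submodule.add_mem_sup ⟨v, rfl⟩ ⟨v, rfl⟩
  exact le_trans (Submodule.finrank_mono hle)
    (Submodule.finrank_add_le_finrank_add_finrank _ _)

lemma mat_rank_smul_le {m n : ℕ} (c : ℝ) (X : Matrix (Fin m) (Fin n) ℝ) :
    (c • X).rank ≤ X.rank := by
  rw [Matrix.rank, Matrix.rank]
  apply Submodule.finrank_mono
  rintro _ ⟨v, rfl⟩
  refine ⟨c • v, ?_⟩
  simp [Matrix.mulVecLin, Matrix.mulVec_smul, Matrix.smul_mulVec]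

lemma frob_sq_add {m n : ℕ} (X Y : Matrix (Fin m) (Fin n) ℝ) :
    (frobNorm (X + Y)) ^ 2 =
      (frobNorm X) ^ 2 + 2 * frobInner X Y + (frobNorm Y) ^ 2 := by
  simp only [frobNorm_sq, frobInner, Matrix.add_apply]
  have : ∀ (i : Fin m) (j : Fin n), (X i j + Y i j) ^ 2
      = X i j ^ 2 + 2 * (X i j * Y i j) + Y i j ^ 2 := fun i j => by ring
  simp_rw [this, Finset.sum_add_distrib, Finset.mul_sum]

lemma frob_sq_smul {m n : ℕ} (c : ℝ) (X : Matrix (Fin m) (Fin n) ℝ) :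
    (frobNorm (c • X)) ^ 2 = c ^ 2 * (frobNorm X) ^ 2 := by
  simp only [frobNorm_sq, Matrix.smul_apply, smul_eq_mul, mul_pow, Finset.mul_sum]

lemma frobInner_smul {m n : ℕ} (b a : ℝ) (X Y : Matrix (Fin m) (Fin n) ℝ) :
    frobInner (b • X) (a • Y) = b * a * frobInner X Y := by
  simp only [frobInner, Matrix.smul_apply, smul_eq_mul, Finset.mul_sum]
  congr 1; ext i; congr 1; ext j; ring

lemma euclInner_smul {p : ℕ} (b a : ℝ) (x y : Fin p → ℝ) :
    euclInner (b • x) (a • y) = b * a * euclInner x y := by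
  simp only [euclInner, Pi.smul_apply, smul_eq_mul, Finset.mul_sum]
  congr 1; ext i; ring

lemma eucl_polarization {p : ℕ} (x y : Fin p → ℝ) :
    (euclNorm (x + y)) ^ 2 - (euclNorm (x - y)) ^ 2 = 4 * euclInner x y := by
  simp only [euclNorm_sq, euclInner, Pi.add_apply, Pi.sub_apply, Finset.mul_sum,
    ← Finset.sum_sub_distrib]
  congr 1; ext i; ring

end Aux

set_option maxHeartbeats 1000000 in
/-- Lemma 3: if `⟨Z₁, Z₂⟩ = 0` and `rank Z₁ + rank Z₂ ≤ min(m, n)`, then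
`|⟨𝒜(Z₁), 𝒜(Z₂)⟩| ≤ R_{rank Z₁ + rank Z₂} ‖Z₁‖_F ‖Z₂‖_F`. -/
theorem ric_orthogonal_inner_bound {m n p : ℕ}
    (A : Matrix (Fin m) (Fin n) ℝ →ₗ[ℝ] (Fin p → ℝ))
    (Z1 Z2 : Matrix (Fin m) (Fin n) ℝ)
    (horth : frobInner Z1 Z2 = 0)
    (hrank : Z1.rank + Z2.rank ≤ min m n)
    (R : ℝ) (hR : IsRIC A (Z1.rank + Z2.rank) R) :
    |euclInner (A Z1) (A Z2)| ≤ R * frobNorm Z1 * frobNorm Z2 := by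
  by_cases h1 : Z1 = 0
  · subst h1
    simp [euclInner, frobNorm, abs_le]
  by_cases h2 : Z2 = 0
  · subst h2
    simp [euclInner, frobNorm, abs_le]
  set a := frobNorm Z1 with ha
  set b := frobNorm Z2 with hb
  have hapos : 0 < a := frobNorm_pos h1
  have hbpos : 0 < b := frobNorm_pos h2
  set W1 : Matrix (Fin m) (Fin n) ℝ := b • Z1 with hW1
  set W2 : Matrix (Fin m) (Fin n) ℝ := a • Z2 with hW2
  have hrank1 : (W1 + W2).rank ≤ Z1.rank + Z2.rank :=
    le_trans (mat_rank_add_le _ _)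
      (add_le_add (mat_rank_smul_le _ _) (mat_rank_smul_le _ _))
  have hsub : W1 - W2 = W1 + (-a) • Z2 := by
    rw [hW2, neg_smul, ← sub_eq_add_neg]
  have hrank2 : (W1 - W2).rank ≤ Z1.rank + Z2.rank := by
    rw [hsub]
    exact le_trans (mat_rank_add_le _ _)
      (add_le_add (mat_rank_smul_le _ _) (mat_rank_smul_le _ _))
  have hcross : frobInner W1 W2 = 0 := by
    rw [hW1, hW2, frobInner_smul, horth, mul_zero]
  have hWsum : (frobNorm (W1 + W2)) ^ 2 = 2 * (a * b) ^ 2 := by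
    rw [frob_sq_add, hcross, hW1, hW2, frob_sq_smul, frob_sq_smul, ← ha, ← hb]
    ring
  have hWdiff : (frobNorm (W1 - W2)) ^ 2 = 2 * (a * b) ^ 2 := by
    rw [hsub, frob_sq_add, hW1, frobInner_smul, horth, frob_sq_smul, frob_sq_smul,
      ← ha, ← hb]
    ring
  obtain ⟨hRmem, -⟩ := hR
  obtain ⟨hs1, hs2⟩ := hRmem (W1 + W2) hrank1
  obtain ⟨hd1, hd2⟩ := hRmem (W1 - W2) hrank2
  rw [hWsum] at hs1 hs2
  rw [hWdiff] at hd1 hd2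
  have hmapsum : A (W1 + W2) = A W1 + A W2 := map_add _ _ _
  have hmapdiff : A (W1 - W2) = A W1 - A W2 := map_sub _ _ _
  rw [hmapsum] at hs1 hs2
  rw [hmapdiff] at hd1 hd2
  have hpol := eucl_polarization (A W1) (A W2)
  have hIW : euclInner (A W1) (A W2) = b * a * euclInner (A Z1) (A Z2) := by
    rw [hW1, hW2, _root_.map_smul, _root_.map_smul, euclInner_smul]
  have hub : 4 * euclInner (A W1) (A W2) ≤ 4 * (R * (a * b) ^ 2) := by
    rw [← hpol]; nlinarith [hs2, hd1]
  have hlb : -(4 * (R * (a * b) ^ 2)) ≤ 4 * euclInner (A W1) (A W2) := by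
    rw [← hpol]; nlinarith [hs1, hd2]
  have habs : |euclInner (A W1) (A W2)| ≤ R * (a * b) ^ 2 := by
    rw [abs_le]; constructor <;> linarith
  rw [hIW, abs_mul, abs_of_pos (by positivity : (0:ℝ) < b * a)] at habs
  have hba : 0 < b * a := by positivity
  have heq : R * (a * b) ^ 2 = b * a * (R * a * b) := by ring
  have : b * a * |euclInner (A Z1) (A Z2)| ≤ b * a * (R * a * b) := by
    linarith
  have := le_of_mul_le_mul_left this hba
  linarith
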